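/- arXiv:2204.01353 — 2 statements merged into one kernel-verified Lean document; each statement's English description precedes it below -/
import Mathlib

section
/- Let Ω be a finite (or countable) sample space with a probability measure, let ω be a random element of Ω, and let X, Y be random functions from Ω to [0,1] (random variables taking values in the space of [0,1]-valued functions on Ω), with X₁, X₂ independent copies of X and Y₁, Y₂ independent copies of Y, all independent of ω. Then E_{X₁,X₂} log(1 − E_ω[X₁(ω)X₂(ω)]) + E_{Y₁,Y₂} log(1 − E_ω[Y₁(ω)Y₂(ω)]) ≤ 2 E_{X,Y} log(1 − E_ω[X(ω)Y(ω)]), provided all the inner expectations E_ω lie in [0,1) almost surely so that the logarithms are defined. -/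
/-!
Expand `-log (1 - s) = ∑ₖ sᵏ⁺¹ / (k + 1)`. Writing `(E_ω X Y)ⁿ` as an average over `n`
independent replicas `ω₁, …, ωₙ`, the `n`-th moment `E_{X,Y} (E_ω X Y)ⁿ` becomes `E_{ω₁…ωₙ} [u v]`
with `u = E_X ∏ᵢ X(ωᵢ)` and `v = E_Y ∏ᵢ Y(ωᵢ)`, while the `XX` and `YY` moments are `E [u²]` and
`E [v²]`.
So each term of the series obeys `2uv ≤ u² + v²`, and summing gives the inequality.
-/

open Finset

theorem sum_sum_mul_inner_pow_eq {Ω A B : Type*} [Fintype Ω] [Fintype A] [Fintype B]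
    (μ : Ω → ℝ) (p : A → ℝ) (q : B → ℝ) (X : A → Ω → ℝ) (Y : B → Ω → ℝ) (n : ℕ) :
    ∑ a, ∑ b, p a * q b * (∑ ω, μ ω * (X a ω * Y b ω)) ^ n
      = ∑ w : Fin n → Ω, (∏ i, μ (w i)) *
          ((∑ a, p a * ∏ i, X a (w i)) * (∑ b, q b * ∏ i, Y b (w i))) := by
  have hterm : ∀ a b, p a * q b * (∑ ω, μ ω * (X a ω * Y b ω)) ^ n
      = ∑ w : Fin n → Ω, (∏ i, μ (w i)) * ((p a * ∏ i, X a (w i)) * (q b * ∏ i, Y b (w i))) :=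
    fun a b => by
      rw [Fintype.sum_pow, mul_sum]
      exact sum_congr rfl fun w _ => by rw [prod_mul_distrib, prod_mul_distrib]; ring
  simp only [hterm, mul_sum, sum_mul]
  exact (sum_congr rfl fun a _ => sum_comm).trans
    (sum_comm.trans (sum_congr rfl fun w _ => sum_comm))

theorem two_mul_sum_sum_mul_inner_pow_le {Ω A B : Type*} [Fintype Ω] [Fintype A] [Fintype B]
    (μ : Ω → ℝ) (hμ : ∀ ω, 0 ≤ μ ω) (p : A → ℝ) (q : B → ℝ)
    (X : A → Ω → ℝ) (Y : B → Ω → ℝ) (n : ℕ) :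
    2 * ∑ a, ∑ b, p a * q b * (∑ ω, μ ω * (X a ω * Y b ω)) ^ n
      ≤ ∑ a, ∑ b, p a * p b * (∑ ω, μ ω * (X a ω * X b ω)) ^ n
        + ∑ a, ∑ b, q a * q b * (∑ ω, μ ω * (Y a ω * Y b ω)) ^ n := by
  rw [sum_sum_mul_inner_pow_eq, sum_sum_mul_inner_pow_eq, sum_sum_mul_inner_pow_eq, mul_sum,
    ← sum_add_distrib]
  refine sum_le_sum fun w _ => ?_
  set u := ∑ a, p a * ∏ i, X a (w i)
  set v := ∑ b, q b * ∏ i, Y b (w i)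
  have hμw : 0 ≤ ∏ i, μ (w i) := prod_nonneg fun i _ => hμ (w i)
  have hsq : (∏ i, μ (w i)) * (u * u) + (∏ i, μ (w i)) * (v * v) - 2 * ((∏ i, μ (w i)) * (u * v))
      = (∏ i, μ (w i)) * (u - v) ^ 2 := by ring
  linarith [mul_nonneg hμw (sq_nonneg (u - v))]

theorem hasSum_sum_sum_mul_pow_div_log {A B : Type*} [Fintype A] [Fintype B]
    (p : A → ℝ) (q : B → ℝ) (S : A → B → ℝ) (hS : ∀ a b, |S a b| < 1) :
    HasSum (fun k : ℕ => (∑ a, ∑ b, p a * q b * S a b ^ (k + 1)) / (k + 1))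
      (-∑ a, ∑ b, p a * q b * Real.log (1 - S a b)) := by
  have hab : ∀ a b, HasSum (fun k : ℕ => p a * q b * (S a b ^ (k + 1) / (k + 1)))
      (p a * q b * -Real.log (1 - S a b)) := fun a b =>
    (Real.hasSum_pow_div_log_of_abs_lt_one (hS a b)).mul_left (p a * q b)
  have := hasSum_sum (s := univ) fun a _ => hasSum_sum (s := univ) fun b _ => hab a b
  simpa only [sum_div, mul_div_assoc, mul_neg, sum_neg_distrib] using this

theorem stmt3_general {Ω A B : Type*} [Fintype Ω] [Fintype A] [Fintype B]
    (μ : Ω → ℝ) (hμ0 : ∀ ω, 0 ≤ μ ω)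
    (pX : A → ℝ)
    (pY : B → ℝ)
    (X : A → Ω → ℝ) (hX : ∀ a ω, X a ω ∈ Set.Icc (0:ℝ) 1)
    (Y : B → Ω → ℝ) (hY : ∀ b ω, Y b ω ∈ Set.Icc (0:ℝ) 1)
    (hXX : ∀ a b, ∑ ω, μ ω * (X a ω * X b ω) < 1)
    (hYY : ∀ a b, ∑ ω, μ ω * (Y a ω * Y b ω) < 1)
    (hXY : ∀ a b, ∑ ω, μ ω * (X a ω * Y b ω) < 1) :
    (∑ a, ∑ b, pX a * pX b * Real.log (1 - ∑ ω, μ ω * (X a ω * X b ω)))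
      + (∑ a, ∑ b, pY a * pY b * Real.log (1 - ∑ ω, μ ω * (Y a ω * Y b ω)))
      ≤ 2 * ∑ a, ∑ b, pX a * pY b * Real.log (1 - ∑ ω, μ ω * (X a ω * Y b ω)) := by
  have habs : ∀ f g : Ω → ℝ, (∀ ω, 0 ≤ f ω) → (∀ ω, 0 ≤ g ω) →
      ∑ ω, μ ω * (f ω * g ω) < 1 → |∑ ω, μ ω * (f ω * g ω)| < 1 := fun f g hf hg h1 =>
    abs_lt.2 ⟨(neg_one_lt_zero).trans_le
      (sum_nonneg fun ω _ => mul_nonneg (hμ0 ω) (mul_nonneg (hf ω) (hg ω))), h1⟩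
  have sXX := hasSum_sum_sum_mul_pow_div_log pX pX _ fun a b =>
    habs _ _ (fun ω => (hX a ω).1) (fun ω => (hX b ω).1) (hXX a b)
  have sYY := hasSum_sum_sum_mul_pow_div_log pY pY _ fun a b =>
    habs _ _ (fun ω => (hY a ω).1) (fun ω => (hY b ω).1) (hYY a b)
  have sXY := hasSum_sum_sum_mul_pow_div_log pX pY _ fun a b =>
    habs _ _ (fun ω => (hX a ω).1) (fun ω => (hY b ω).1) (hXY a b)
  have := hasSum_le (fun k => ?_) (sXY.mul_left 2) (sXX.add sYY)
  · linarith
  rw [← add_div, ← mul_div_assoc]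
  exact div_le_div_of_nonneg_right (two_mul_sum_sum_mul_inner_pow_le μ hμ0 pX pY X Y _)
    (by positivity)

/-- The key correlation inequality for the interpolation method:
`E log(1 - E_ω X₁X₂) + E log(1 - E_ω Y₁Y₂) ≤ 2 E log(1 - E_ω XY)`. -/
theorem stmt3 {Ω A B : Type*} [Fintype Ω] [Fintype A] [Fintype B]
    (μ : Ω → ℝ) (hμ0 : ∀ ω, 0 ≤ μ ω) (hμ1 : ∑ ω, μ ω = 1)
    (pX : A → ℝ) (hpX0 : ∀ a, 0 ≤ pX a) (hpX1 : ∑ a, pX a = 1)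
    (pY : B → ℝ) (hpY0 : ∀ b, 0 ≤ pY b) (hpY1 : ∑ b, pY b = 1)
    (X : A → Ω → ℝ) (hX : ∀ a ω, X a ω ∈ Set.Icc (0:ℝ) 1)
    (Y : B → Ω → ℝ) (hY : ∀ b ω, Y b ω ∈ Set.Icc (0:ℝ) 1)
    (hXX : ∀ a b, ∑ ω, μ ω * (X a ω * X b ω) < 1)
    (hYY : ∀ a b, ∑ ω, μ ω * (Y a ω * Y b ω) < 1)
    (hXY : ∀ a b, ∑ ω, μ ω * (X a ω * Y b ω) < 1) :
    (∑ a, ∑ b, pX a * pX b * Real.log (1 - ∑ ω, μ ω * (X a ω * X b ω)))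
      + (∑ a, ∑ b, pY a * pY b * Real.log (1 - ∑ ω, μ ω * (Y a ω * Y b ω)))
      ≤ 2 * ∑ a, ∑ b, pX a * pY b * Real.log (1 - ∑ ω, μ ω * (X a ω * Y b ω)) :=
  stmt3_general μ hμ0 pX pY X hX Y hY hXX hYY hXY
end

section
/- Let Ω be a finite sample space with a random element ω, let X and Y be random [0,1]-valued functions on Ω with independent copies X₁, X₂ and Y₁, Y₂ respectively. Then for every positive integer ℓ: E_{X₁,X₂}(E_ω X₁(ω)X₂(ω))^ℓ + E_{Y₁,Y₂}(E_ω Y₁(ω)Y₂(ω))^ℓ − 2 E_{X,Y}(E_ω X(ω)Y(ω))^ℓ ≥ 0. -/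
/-!
Expanding the `ℓ`-th power of an inner sum over `ω` into a sum over tuples `w = (ω₁, …, ω_ℓ)`
turns each of the three terms into `∑ w, μ(w) F w G w`, where `μ(w) = ∏ μ (ωᵢ)` and
`F w = E_X ∏ X(ωᵢ)`, `G w = E_Y ∏ Y(ωᵢ)` (`expectProd`). The left-hand side is therefore
`∑ w, μ(w) (F w - G w)²`, which is nonnegative since `μ ≥ 0`.
-/

open Finset

def expectProd {Ω A : Type*} [Fintype A] {ℓ : ℕ} (p : A → ℝ) (X : A → Ω → ℝ)
    (w : Fin ℓ → Ω) : ℝ :=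
  ∑ a, p a * ∏ i, X a (w i)

lemma sum_mul_mul_pow_eq_sum_expectProd {Ω A B : Type*} [Fintype Ω] [Fintype A] [Fintype B]
    (μ : Ω → ℝ) (p : A → ℝ) (q : B → ℝ)
    (X : A → Ω → ℝ) (Y : B → Ω → ℝ) (ℓ : ℕ) :
    ∑ a, ∑ b, p a * q b * (∑ ω, μ ω * (X a ω * Y b ω)) ^ ℓ
      = ∑ w : Fin ℓ → Ω, (∏ i, μ (w i)) * (expectProd p X w * expectProd q Y w) := by
  simp_rw [Fintype.sum_pow, prod_mul_distrib, mul_sum, expectProd, sum_mul_sum, mul_sum]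
  refine (sum_congr rfl fun a _ => sum_comm).trans (sum_comm.trans ?_)
  refine sum_congr rfl fun w _ => sum_congr rfl fun a _ => sum_congr rfl fun b _ => ?_
  ring

theorem stmt4_general {Ω A B : Type*} [Fintype Ω] [Fintype A] [Fintype B]
    (μ : Ω → ℝ) (hμ0 : ∀ ω, 0 ≤ μ ω)
    (pX : A → ℝ)
    (pY : B → ℝ)
    (X : A → Ω → ℝ)
    (Y : B → Ω → ℝ)
    (ℓ : ℕ) :
    0 ≤ (∑ a, ∑ b, pX a * pX b * (∑ ω, μ ω * (X a ω * X b ω)) ^ ℓ)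
      + (∑ a, ∑ b, pY a * pY b * (∑ ω, μ ω * (Y a ω * Y b ω)) ^ ℓ)
      - 2 * ∑ a, ∑ b, pX a * pY b * (∑ ω, μ ω * (X a ω * Y b ω)) ^ ℓ := by
  simp_rw [sum_mul_mul_pow_eq_sum_expectProd, mul_sum, ← sum_add_distrib, ← sum_sub_distrib]
  refine sum_nonneg fun w _ => ?_
  have hμw : 0 ≤ ∏ i, μ (w i) := prod_nonneg fun i _ => hμ0 (w i)
  nlinarith [mul_nonneg hμw (sq_nonneg (expectProd pX X w - expectProd pY Y w))]

/-- Moment inequality: for every positive integer `ℓ`,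
`E (E_ω X₁X₂)^ℓ + E (E_ω Y₁Y₂)^ℓ - 2 E (E_ω XY)^ℓ ≥ 0`. -/
theorem stmt4 {Ω A B : Type*} [Fintype Ω] [Fintype A] [Fintype B]
    (μ : Ω → ℝ) (hμ0 : ∀ ω, 0 ≤ μ ω) (hμ1 : ∑ ω, μ ω = 1)
    (pX : A → ℝ) (hpX0 : ∀ a, 0 ≤ pX a) (hpX1 : ∑ a, pX a = 1)
    (pY : B → ℝ) (hpY0 : ∀ b, 0 ≤ pY b) (hpY1 : ∑ b, pY b = 1)
    (X : A → Ω → ℝ) (hX : ∀ a ω, X a ω ∈ Set.Icc (0:ℝ) 1)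
    (Y : B → Ω → ℝ) (hY : ∀ b ω, Y b ω ∈ Set.Icc (0:ℝ) 1)
    (ℓ : ℕ) (hℓ : 1 ≤ ℓ) :
    0 ≤ (∑ a, ∑ b, pX a * pX b * (∑ ω, μ ω * (X a ω * X b ω)) ^ ℓ)
      + (∑ a, ∑ b, pY a * pY b * (∑ ω, μ ω * (Y a ω * Y b ω)) ^ ℓ)
      - 2 * ∑ a, ∑ b, pX a * pY b * (∑ ω, μ ω * (X a ω * Y b ω)) ^ ℓ :=
  stmt4_general μ hμ0 pX pY X Y ℓ
end
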